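/- arXiv:math/0412357 — 5 statements merged into one kernel-verified Lean document; each statement's English description precedes it below -/
import Mathlib

section
/- Let V be a finite-dimensional vector space over a field Ω of characteristic zero, let φ be an invertible linear endomorphism of V, let N be a linear endomorphism of V, and let q ≥ 2 be an integer. If N ∘ φ = q • (φ ∘ N), then N is nilpotent. -/
/-!
Conjugation by `φ` carries `q • N` to `N`, so `N` and `q • N` have the same minimal polynomial
`m = ∑ mᵢ Xⁱ` of degree `d`. The minimal polynomial of `q • N` is `m` with its roots scaled by
`q`, whose coefficients are `mᵢ qᵈ⁻ⁱ`; as `q` is not a root of unity, `mᵢ = 0` for `i < d`.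
Hence `m = Xᵈ` and `Nᵈ = 0`.
-/

open Polynomial

theorem Polynomial.Monic.eq_X_pow_of_scaleRoots_eq {R : Type*} [CommRing R] [IsDomain R]
    {p : R[X]} (hp : p.Monic) {r : R} (hr : ∀ n ≠ 0, r ^ n ≠ 1) (h : p.scaleRoots r = p) :
    p = X ^ p.natDegree := by
  refine hp.eq_X_pow_iff_natTrailingDegree_eq_natDegree.mpr <| le_antisymm
    (natTrailingDegree_le_natDegree p) <| le_natTrailingDegree hp.ne_zero fun i hi ↦ ?_
  have hcoeff : p.coeff i * r ^ (p.natDegree - i) = p.coeff i := by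
    rw [← coeff_scaleRoots, h]
  by_contra hne
  exact hr _ (Nat.sub_ne_zero_of_lt hi) <| mul_left_cancel₀ hne (hcoeff.trans (mul_one _).symm)

section

variable {K A : Type*} [Field K] [Ring A] [Algebra K A]

theorem minpoly.smul_eq_scaleRoots {x : A} (hx : IsIntegral K x) {c : K} (hc : c ≠ 0) :
    minpoly K (c • x) = (minpoly K x).scaleRoots c := by
  have annihilates {y : A} {p : K[X]} (c : K) (hp : Polynomial.aeval y p = 0) :
      Polynomial.aeval (c • y) (p.scaleRoots c) = 0 := by
    rw [Algebra.smul_def]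
    exact scaleRoots_aeval_eq_zero hp
  refine (minpoly.unique _ _ ((monic_scaleRoots_iff c).mpr (minpoly.monic hx))
    (annihilates c (minpoly.aeval K x)) fun q hq hqx ↦ ?_).symm
  have hqx' : Polynomial.aeval x (q.scaleRoots c⁻¹) = 0 := by
    simpa [smul_smul, inv_mul_cancel₀ hc] using annihilates c⁻¹ hqx
  rw [degree_scaleRoots, ← degree_scaleRoots q (s := c⁻¹)]
  exact minpoly.min K x ((monic_scaleRoots_iff _).mpr hq) hqx'

theorem minpoly.eq_of_isConj {x y : A} (h : IsConj x y) : minpoly K x = minpoly K y := by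
  obtain ⟨u, hu⟩ := h
  have hy : y = MulSemiringAction.toAlgEquiv K A (ConjAct.toConjAct u) x := by
    simpa [ConjAct.units_smul_def] using (Units.eq_mul_inv_iff_mul_eq u).mpr hu.eq.symm
  rw [hy, minpoly.algEquiv_eq]

theorem isNilpotent_of_isConj_smul {x : A} (hx : IsIntegral K x) {c : K} (hc0 : c ≠ 0)
    (hc : ∀ n ≠ 0, c ^ n ≠ 1) (h : IsConj (c • x) x) : IsNilpotent x := by
  have hfix : (minpoly K x).scaleRoots c = minpoly K x := by
    rw [← minpoly.smul_eq_scaleRoots hx hc0, minpoly.eq_of_isConj h]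
  have hX := (minpoly.monic hx).eq_X_pow_of_scaleRoots_eq hc hfix
  have hzero := minpoly.aeval K x
  rw [hX, map_pow, aeval_X] at hzero
  exact ⟨_, hzero⟩

end

/-- Let `V` be a finite-dimensional vector space over a field `Ω` of
characteristic zero, let `φ` be an invertible linear endomorphism of `V`, let `N` be a
linear endomorphism of `V`, and let `q ≥ 2` be an integer.  If `N ∘ φ = q • (φ ∘ N)`,
then `N` is nilpotent. -/
theorem statement0 {Ω V : Type*} [Field Ω] [CharZero Ω] [AddCommGroup V] [Module Ω V]
    [FiniteDimensional Ω V] (q : ℕ) (hq : 2 ≤ q) (φ N : Module.End Ω V)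
    (hφ : IsUnit φ) (hrel : N * φ = (q : Ω) • (φ * N)) :
    IsNilpotent N := by
  have hq0 : (q : Ω) ≠ 0 := by exact_mod_cast (by omega : q ≠ 0)
  have hq_not_root_of_unity (n : ℕ) (hn : n ≠ 0) : (q : Ω) ^ n ≠ 1 := by
    rw [← Nat.cast_pow, Ne, Nat.cast_eq_one, Nat.pow_eq_one]
    omega
  have hconj : IsConj ((q : Ω) • N) N :=
    ⟨hφ.unit, by rw [SemiconjBy, IsUnit.unit_spec, mul_smul_comm, hrel]⟩
  exact isNilpotent_of_isConj_smul (LinearMap.isIntegral N) hq0 hq_not_root_of_unity hconj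
end

section
/- Let (φ, N) be a Weil–Deligne pair on a finite-dimensional Ω-vector space V, and write φ = s ∘ u = u ∘ s where s is a diagonalizable invertible endomorphism of V and u is unipotent (u − id is nilpotent). Then (s, N) is again a Weil–Deligne pair (i.e. N ∘ s = q • (s ∘ N)), and for every k ∈ ℚ the pair (φ, N) is pure of weight k if and only if the pair (s, N) is pure of weight k. (A Weil–Deligne representation is pure if and only if its Frobenius semisimplification is pure; part (1) of Lemma 1.2.) -/
open Module

section WeilDeligne

variable {Ω V : Type*} [Field Ω] [CharZero Ω] [AddCommGroup V] [Module Ω V]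

/-- `α ∈ Ω` is a Weil `q^w`-number: it is algebraic over `ℚ` and for every embedding
`σ : Ω → ℂ` one has `|σ α|² = q^w` (real exponentiation). -/
def IsWeilNumber (q : ℕ) (w : ℚ) (α : Ω) : Prop :=
  IsAlgebraic ℚ α ∧ ∀ σ : Ω →+* ℂ, (‖σ α‖) ^ 2 = (q : ℝ) ^ (w : ℝ)

/-- The weight-`w` part `V_w` of `V` relative to `φ`: the sum of the generalized
eigenspaces of `φ` for those eigenvalues which are Weil `q^w`-numbers. -/
noncomputable def wdWeightSpace (q : ℕ) (φ : Module.End Ω V) (w : ℚ) : Submodule Ω V :=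
  ⨆ α ∈ {α : Ω | IsWeilNumber q w α}, φ.maxGenEigenspace α

/-- `(φ, N)` is mixed: `V` is the internal direct sum of the `V_w`, `w ∈ ℚ`. -/
def WDMixed (q : ℕ) (φ : Module.End Ω V) : Prop :=
  DirectSum.IsInternal fun w : ℚ => wdWeightSpace q φ w

/-- `(φ, N)` is pure of weight `k`: it is mixed, all weights lie in `k + ℤ`, and for every
`i ≥ 1` the map `N^i` restricts to a bijection from `V_{k+i}` onto `V_{k-i}`. -/
def WDPure (q : ℕ) (φ N : Module.End Ω V) (k : ℚ) : Prop :=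
  WDMixed q φ ∧
  (∀ w : ℚ, (¬ ∃ i : ℤ, w = k + i) → wdWeightSpace q φ w = ⊥) ∧
  ∀ i : ℤ, 1 ≤ i →
    (∀ x ∈ wdWeightSpace q φ (k + i), (N ^ i.toNat) x = 0 → x = 0) ∧
    Submodule.map (N ^ i.toNat) (wdWeightSpace q φ (k + i)) = wdWeightSpace q φ (k - i)

end WeilDeligne

/-! The eigenspaces of the semisimple part `s` are stable under the commuting unipotent part `u`,
and on `s.eigenspace α` the operator `φ - α = α (u - 1)` is nilpotent; so `s.eigenspace α` lies in
the generalized eigenspace of `φ` for `α`. Since the eigenspaces of `s` span `V` and generalized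
eigenspaces are independent, the two coincide. Hence `φ` and `s` have the same weight spaces, and
purity, which only sees weight spaces, is the same condition for both. A Weil–Deligne pair makes
`N` semiconjugate `φ` to `q • φ = (q • s) u`, so `N` maps `α`-generalized eigenspaces of `φ` to
those of `q • φ`, i.e. `s.eigenspace α` to `(q • s).eigenspace α`; this is `N s = q s N`. -/

namespace Module.End

variable {R M : Type*} [CommRing R] [AddCommGroup M] [Module R M]

lemma pow_apply_eq_of_eqOn {f g : End R M} {p : Submodule R M} (hg : Set.MapsTo g p p)
    (hfg : ∀ x ∈ p, f x = g x) (n : ℕ) : ∀ x ∈ p, (f ^ n) x = (g ^ n) x := by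
  induction n with
  | zero => simp
  | succ n ih =>
    intro x hx
    rw [pow_succ, pow_succ, mul_apply, mul_apply, hfg x hx, ih _ (hg hx)]

lemma mapsTo_maxGenEigenspace_of_semiconjBy {N f g : End R M} (h : SemiconjBy N f g) (μ : R) :
    Set.MapsTo N (f.maxGenEigenspace μ) (g.maxGenEigenspace μ) := by
  intro x hx
  obtain ⟨k, hk⟩ := (mem_maxGenEigenspace f μ x).mp hx
  have hk' : SemiconjBy N ((f - μ • 1) ^ k) ((g - μ • 1) ^ k) :=
    (h.sub_right ((Commute.one_right N).smul_right μ)).pow_right k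
  refine (mem_maxGenEigenspace g μ (N x)).mpr ⟨k, ?_⟩
  rw [← mul_apply, ← hk'.eq, mul_apply, hk, map_zero]

lemma iSup_eigenspace_smul_eq_top {s : End R M} (hs : ⨆ α, s.eigenspace α = ⊤) (c : R) :
    ⨆ α, (c • s).eigenspace α = ⊤ := by
  refine top_le_iff.mp (hs ▸ iSup_le fun α => le_trans (fun x hx => ?_) (le_iSup _ (c * α)))
  rw [mem_eigenspace_iff] at hx ⊢
  rw [LinearMap.smul_apply, hx, smul_smul]

lemma eigenspace_le_maxGenEigenspace_mul {s u : End R M} (hsu : Commute s u)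
    (hu : IsNilpotent (u - 1)) (α : R) : s.eigenspace α ≤ (s * u).maxGenEigenspace α := by
  obtain ⟨n, hn⟩ := hu
  have hmaps : Set.MapsTo ⇑(α • (u - 1)) (s.eigenspace α) (s.eigenspace α) :=
    mapsTo_genEigenspace_of_comm ((hsu.sub_right (Commute.one_right s)).smul_right α) α 1
  have hagree : ∀ x ∈ s.eigenspace α, (s * u - α • 1) x = (α • (u - 1)) x := by
    intro x hx
    have hux : s (u x) = α • u x :=
      mem_eigenspace_iff.mp (mapsTo_genEigenspace_of_comm hsu α 1 hx)
    simp [hux, smul_sub]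
  intro x hx
  refine (mem_maxGenEigenspace _ α x).mpr ⟨n, ?_⟩
  rw [pow_apply_eq_of_eqOn hmaps hagree n x hx, smul_pow, hn, smul_zero, LinearMap.zero_apply]

variable [IsDomain R] [IsTorsionFree R M]

lemma maxGenEigenspace_mul_eq_eigenspace {s u : End R M} (hs : ⨆ α, s.eigenspace α = ⊤)
    (hsu : Commute s u) (hu : IsNilpotent (u - 1)) (α : R) :
    (s * u).maxGenEigenspace α = s.eigenspace α :=
  (congrFun (((s * u).independent_maxGenEigenspace.le_iff_eq_of_iSup_eq_top hs).mp
    (eigenspace_le_maxGenEigenspace_mul hsu hu)) α).symm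

lemma maxGenEigenspace_eq_eigenspace_of_iSup_eigenspace_eq_top {s : End R M}
    (hs : ⨆ α, s.eigenspace α = ⊤) (α : R) : s.maxGenEigenspace α = s.eigenspace α := by
  simpa using maxGenEigenspace_mul_eq_eigenspace hs (Commute.one_right s) (by simp) α

lemma semiconjBy_of_semiconjBy_mul {N s u t v : End R M} (hs : ⨆ α, s.eigenspace α = ⊤)
    (ht : ⨆ α, t.eigenspace α = ⊤) (hsu : Commute s u) (htv : Commute t v)
    (hu : IsNilpotent (u - 1)) (hv : IsNilpotent (v - 1)) (hN : SemiconjBy N (s * u) (t * v)) :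
    SemiconjBy N s t := by
  have hEq : ∀ α, ∀ x ∈ s.eigenspace α, N (s x) = t (N x) := by
    intro α x hx
    have hNx : N x ∈ t.eigenspace α := maxGenEigenspace_mul_eq_eigenspace ht htv hv α ▸
      mapsTo_maxGenEigenspace_of_semiconjBy hN α (eigenspace_le_maxGenEigenspace_mul hsu hu α hx)
    rw [mem_eigenspace_iff.mp hx, mem_eigenspace_iff.mp hNx, map_smul]
  refine LinearMap.ext fun x => Submodule.iSup_induction _ (hs ▸ Submodule.mem_top : x ∈ _)
    (motive := fun x => (N * s) x = (t * N) x) hEq (by simp) fun x y hx hy => ?_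
  simp only [map_add, hx, hy]

end Module.End

open Module.End

section WeilDeligne

variable {Ω V : Type*} [Field Ω] [CharZero Ω] [AddCommGroup V] [Module Ω V]

lemma wdWeightSpace_mul_eq {s u : Module.End Ω V} (hs : ⨆ α, s.eigenspace α = ⊤)
    (hsu : Commute s u) (hu : IsNilpotent (u - 1)) (q : ℕ) (w : ℚ) :
    wdWeightSpace q (s * u) w = wdWeightSpace q s w := by
  simp only [wdWeightSpace, maxGenEigenspace_mul_eq_eigenspace hs hsu hu,
    maxGenEigenspace_eq_eigenspace_of_iSup_eigenspace_eq_top hs]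

lemma wdPure_iff_of_wdWeightSpace_eq {q : ℕ} {φ ψ : Module.End Ω V}
    (h : wdWeightSpace q φ = wdWeightSpace q ψ) (N : Module.End Ω V) (k : ℚ) :
    WDPure q φ N k ↔ WDPure q ψ N k := by
  simp only [WDPure, WDMixed, h]

end WeilDeligne

theorem statement4_general {Ω V : Type*} [Field Ω] [CharZero Ω]
    [AddCommGroup V] [Module Ω V]
    (q : ℕ) (φ N s u : Module.End Ω V)
    (hrel : N * φ = (q : Ω) • (φ * N))
    (hsu : φ = s * u) (hus : φ = u * s)
    (hdiag : (⨆ α : Ω, s.eigenspace α) = ⊤)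
    (hu : IsNilpotent (u - 1)) :
    N * s = (q : Ω) • (s * N) ∧
    ∀ k : ℚ, WDPure q φ N k ↔ WDPure q s N k := by
  subst hsu
  have hcomm : Commute s u := hus
  refine ⟨?_, fun k => wdPure_iff_of_wdWeightSpace_eq
    (funext (wdWeightSpace_mul_eq hdiag hcomm hu q)) N k⟩
  have hN : SemiconjBy N (s * u) (((q : Ω) • s) * u) := by
    rw [SemiconjBy, smul_mul_assoc, hrel, smul_mul_assoc]
  rw [← smul_mul_assoc]
  exact semiconjBy_of_semiconjBy_mul hdiag (iSup_eigenspace_smul_eq_top hdiag q) hcomm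
    (hcomm.smul_left _) hu hu hN

/-- Write `φ = s ∘ u = u ∘ s` with `s` diagonalizable and invertible and `u`
unipotent.  Then `(s, N)` is again a Weil–Deligne pair, and `(φ, N)` is pure of weight `k`
if and only if `(s, N)` is pure of weight `k` (purity is invariant under Frobenius
semisimplification). -/
theorem statement4 {Ω V : Type*} [Field Ω] [CharZero Ω] [IsAlgClosed Ω]
    [AddCommGroup V] [Module Ω V] [FiniteDimensional Ω V]
    (q : ℕ) (hq : 2 ≤ q) (φ N s u : Module.End Ω V)
    (hφ : IsUnit φ) (hrel : N * φ = (q : Ω) • (φ * N))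
    (hsu : φ = s * u) (hus : φ = u * s)
    (hs : IsUnit s) (hdiag : (⨆ α : Ω, s.eigenspace α) = ⊤)
    (hu : IsNilpotent (u - 1)) :
    N * s = (q : Ω) • (s * N) ∧
    ∀ k : ℚ, WDPure q φ N k ↔ WDPure q s N k :=
  statement4_general q φ N s u hrel hsu hus hdiag hu
end

section
/- Let (φ, N) be a Weil–Deligne pair on a finite-dimensional Ω-vector space V with respect to the integer q ≥ 2, and let f ≥ 1 be an integer. Then (φ^f, N) is a Weil–Deligne pair with respect to q^f, and for every k ∈ ℚ the pair (φ, N) is pure of weight k with respect to q if and only if the pair (φ^f, N) is pure of weight k with respect to q^f. (A Weil–Deligne representation is pure if and only if its restriction to the Weil group of a finite extension is pure; part (2) of Lemma 1.2.) -/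
open Module

/-!
Over an algebraically closed field the generalized eigenspace of `φ ^ f` at `β` is the sum of
the generalized eigenspaces of `φ` at the `f`-th roots of `β`, and `α` is a Weil `q^w`-number
exactly when `α ^ f` is a Weil `(q^f)^w`-number. Hence `φ` (with respect to `q`) and `φ ^ f`
(with respect to `q ^ f`) have the same weight spaces `V_w`, and the two purity conditions are
literally the same statement.
-/

namespace Module.End

open Polynomial

variable {R M : Type*} [CommRing R] [AddCommGroup M] [Module R M]

/-- `X - α` divides `X ^ f - α ^ f`, so `(φ ^ f - α ^ f) ^ k` is a multiple of `(φ - α) ^ k`. -/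
lemma maxGenEigenspace_le_maxGenEigenspace_pow (φ : End R M) (f : ℕ) (α : R) :
    φ.maxGenEigenspace α ≤ (φ ^ f).maxGenEigenspace (α ^ f) := by
  intro x hx
  rw [mem_maxGenEigenspace] at hx ⊢
  obtain ⟨k, hk⟩ := hx
  obtain ⟨p, hp⟩ : X - C α ∣ X ^ f - C (α ^ f) := dvd_iff_isRoot.mpr (by simp)
  have hsub : φ - α • 1 = aeval φ (X - C α) := by
    rw [map_sub, aeval_X, aeval_C, Algebra.algebraMap_eq_smul_one]
  have hsub_pow : φ ^ f - α ^ f • 1 = aeval φ (X ^ f - C (α ^ f)) := by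
    rw [map_sub, map_pow, aeval_X, aeval_C, Algebra.algebraMap_eq_smul_one]
  have hcomm : Commute (aeval φ (X - C α)) (aeval φ p) := (Commute.all _ _).map (aeval φ)
  refine ⟨k, ?_⟩
  rw [hsub_pow, hp, map_mul, hcomm.mul_pow, (hcomm.pow_pow k k).eq, mul_apply, ← hsub, hk,
    map_zero]

variable {K V : Type*} [Field K] [IsAlgClosed K] [AddCommGroup V] [Module K V]
  [FiniteDimensional K V]

lemma maxGenEigenspace_pow_eq_iSup (φ : End K V) (f : ℕ) (β : K) :
    (φ ^ f).maxGenEigenspace β = ⨆ (α : K) (_ : α ^ f = β), φ.maxGenEigenspace α := by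
  -- Each `S γ` lies in the generalized eigenspace of `φ ^ f` at `γ`; these are independent,
  -- and the `S γ` already span `V`.
  set S : K → Submodule K V := fun γ ↦ ⨆ (α : K) (_ : α ^ f = γ), φ.maxGenEigenspace α
  have hS_le : S ≤ (φ ^ f).maxGenEigenspace := by
    intro γ
    refine iSup₂_le fun α hα ↦ ?_
    rw [← hα]
    exact maxGenEigenspace_le_maxGenEigenspace_pow φ f α
  have hS_top : iSup S = ⊤ := by
    rw [eq_top_iff, ← φ.iSup_maxGenEigenspace_eq_top]
    refine iSup_le fun α ↦ le_iSup_of_le (α ^ f) ?_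
    exact le_iSup₂_of_le α rfl le_rfl
  exact (congrFun (((φ ^ f).independent_maxGenEigenspace.le_iff_eq_of_iSup_eq_top hS_top).mp
    hS_le) β).symm

end Module.End

lemma mul_pow_eq_smul_pow_mul {R A : Type*} [CommSemiring R] [Semiring A] [Algebra R A]
    {N φ : A} {c : R} (h : N * φ = c • (φ * N)) (m : ℕ) : N * φ ^ m = c ^ m • (φ ^ m * N) := by
  induction m with
  | zero => simp
  | succ m ih =>
    rw [pow_succ, ← mul_assoc, ih, smul_mul_assoc, mul_assoc, h, mul_smul_comm, smul_smul,
      ← mul_assoc, pow_succ]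

lemma isWeilNumber_pow_iff {Ω : Type*} [Field Ω] [CharZero Ω] (q : ℕ) {f : ℕ} (hf : f ≠ 0)
    (w : ℚ) (α : Ω) : IsWeilNumber (q ^ f) w (α ^ f) ↔ IsWeilNumber q w α := by
  have hnorm (σ : Ω →+* ℂ) : ‖σ (α ^ f)‖ ^ 2 = (‖σ α‖ ^ 2) ^ f := by
    rw [map_pow, norm_pow, ← pow_mul, ← pow_mul, mul_comm]
  have hbound : ((q ^ f : ℕ) : ℝ) ^ (w : ℝ) = ((q : ℝ) ^ (w : ℝ)) ^ f := by
    rw [Nat.cast_pow, Real.rpow_pow_comm (Nat.cast_nonneg q)]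
  have hpow_inj : ∀ σ : Ω →+* ℂ,
      (‖σ α‖ ^ 2) ^ f = ((q : ℝ) ^ (w : ℝ)) ^ f ↔ ‖σ α‖ ^ 2 = (q : ℝ) ^ (w : ℝ) := fun σ ↦
    pow_left_inj₀ (sq_nonneg _) (Real.rpow_nonneg (Nat.cast_nonneg q) _) hf
  simp only [IsWeilNumber, hnorm, hbound, hpow_inj]
  exact and_congr_left' ⟨fun h ↦ h.of_pow (Nat.pos_of_ne_zero hf), fun h ↦
    isAlgebraic_iff_isIntegral.mpr (h.isIntegral.pow f)⟩

lemma wdWeightSpace_pow {Ω V : Type*} [Field Ω] [CharZero Ω] [IsAlgClosed Ω]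
    [AddCommGroup V] [Module Ω V] [FiniteDimensional Ω V]
    (q : ℕ) (φ : Module.End Ω V) {f : ℕ} (hf : f ≠ 0) (w : ℚ) :
    wdWeightSpace (q ^ f) (φ ^ f) w = wdWeightSpace q φ w := by
  refine le_antisymm (iSup₂_le fun β hβ ↦ ?_) (iSup₂_le fun α hα ↦ ?_)
  · rw [φ.maxGenEigenspace_pow_eq_iSup f β]
    refine iSup₂_le fun α hα ↦ ?_
    have hweil : IsWeilNumber q w α := (isWeilNumber_pow_iff q hf w α).mp (hα ▸ hβ)
    exact le_biSup φ.maxGenEigenspace hweil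
  · have hweil : IsWeilNumber (q ^ f) w (α ^ f) := (isWeilNumber_pow_iff q hf w α).mpr hα
    exact (φ.maxGenEigenspace_le_maxGenEigenspace_pow f α).trans
      (le_biSup (φ ^ f).maxGenEigenspace hweil)

theorem statement5_general {Ω V : Type*} [Field Ω] [CharZero Ω] [IsAlgClosed Ω]
    [AddCommGroup V] [Module Ω V] [FiniteDimensional Ω V]
    (q : ℕ) (φ N : Module.End Ω V)
    (hφ : IsUnit φ) (hrel : N * φ = (q : Ω) • (φ * N))
    (f : ℕ) (hf : 1 ≤ f) :
    (IsUnit (φ ^ f) ∧ N * φ ^ f = ((q ^ f : ℕ) : Ω) • (φ ^ f * N)) ∧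
    ∀ k : ℚ, WDPure q φ N k ↔ WDPure (q ^ f) (φ ^ f) N k := by
  refine ⟨⟨hφ.pow f, by rw [Nat.cast_pow]; exact mul_pow_eq_smul_pow_mul hrel f⟩, fun k ↦ ?_⟩
  simp only [WDPure, WDMixed, wdWeightSpace_pow q φ (Nat.one_le_iff_ne_zero.mp hf)]

/-- If `(φ, N)` is a Weil–Deligne pair with respect to `q` and `f ≥ 1`, then
`(φ^f, N)` is a Weil–Deligne pair with respect to `q^f`, and `(φ, N)` is pure of weight
`k` with respect to `q` if and only if `(φ^f, N)` is pure of weight `k` with respect to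
`q^f` (purity is invariant under restriction to the Weil group of a finite extension). -/
theorem statement5 {Ω V : Type*} [Field Ω] [CharZero Ω] [IsAlgClosed Ω]
    [AddCommGroup V] [Module Ω V] [FiniteDimensional Ω V]
    (q : ℕ) (hq : 2 ≤ q) (φ N : Module.End Ω V)
    (hφ : IsUnit φ) (hrel : N * φ = (q : Ω) • (φ * N))
    (f : ℕ) (hf : 1 ≤ f) :
    (IsUnit (φ ^ f) ∧ N * φ ^ f = ((q ^ f : ℕ) : Ω) • (φ ^ f * N)) ∧
    ∀ k : ℚ, WDPure q φ N k ↔ WDPure (q ^ f) (φ ^ f) N k :=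
  statement5_general q φ N hφ hrel f hf
end

section
/- Let φ be a diagonalizable invertible endomorphism of a finite-dimensional Ω-vector space V, let k ∈ ℚ, and let N, N′ be endomorphisms of V with N ∘ φ = q • (φ ∘ N) and N′ ∘ φ = q • (φ ∘ N′). If both (φ, N) and (φ, N′) are pure of weight k, then there exists an invertible endomorphism g of V with g ∘ φ = φ ∘ g and g ∘ N = N′ ∘ g. (Given a semisimple Frobenius, there is up to equivalence at most one monodromy operator making the representation pure; part (4) of Lemma 1.2.) -/
open Module

/-!
Since `N φ = q φ N`, the monodromy `N` maps the eigenspace `E_{qα}` of `φ` into `E_α`, lowering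
weights by `2`. Purity says that `N^m : E_{q^m α} → E_α` is bijective when `α` has weight `k - m`.
For `α` of weight `k + m` with `m ≥ 0` this gives `E_α = P_α ⊕ N E_{qα}`, where
`P_α = E_α ∩ ker N^{m+1}` is the primitive part and `N` is injective on `E_{qα}`; for `m < 0` it
gives `E_α = N E_{qα}`. Iterating yields the Lefschetz decomposition `V = ⊕ N^j P_β`, over
`j ≤ m_β`, with `N^j` injective on `P_β`. Since `dim P_α = dim E_α - dim E_{qα}` depends only on
`φ`, any isomorphisms `P_β(N) ≅ P_β(N')` extend to `g (N^j x) = N'^j (h_β x)`, and this `g`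
commutes with `φ` and carries `N` to `N'`. If `Ω` has no embedding into `ℂ`, all the weight
spaces coincide, so mixedness forces `V = 0`.
-/

section Lattice

variable {α ι κ : Type*} [CompleteLattice α] [IsModularLattice α]

theorem iSupIndep.iSup_inf_eq_of_le {f g : ι → α} (hg : iSupIndep g) (hfg : f ≤ g) (i : ι) :
    (⨆ j, f j) ⊓ g i = f i := by
  have hdisj : (⨆ j, ⨆ (_ : j ≠ i), f j) ⊓ g i = ⊥ :=
    ((hg i).symm.mono_left (iSup₂_mono fun j _ => hfg j)).eq_bot
  rw [iSup_split_single f i, sup_inf_assoc_of_le _ (hfg i), hdisj, sup_bot_eq]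

variable [IsCompactlyGenerated α]

theorem iSupIndep_of_disjoint_iSup_lt {f : ℕ → α} (h : ∀ n, Disjoint (f n) (⨆ j < n, f j)) :
    iSupIndep f := by
  classical
  refine iSupIndep_iff_supIndep.mpr fun s => ?_
  induction s using Finset.induction_on_max with
  | empty => exact Finset.supIndep_empty f
  | insert n s hlt ih =>
    exact ih.insert ((h n).mono_right (Finset.sup_le fun j hj => le_biSup f (hlt j hj)))

theorem iSupIndep_prod {f : ι × κ → α} (h₁ : iSupIndep fun i => ⨆ j, f (i, j))
    (h₂ : ∀ i, iSupIndep fun j => f (i, j)) : iSupIndep f := by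
  classical
  refine iSupIndep_iff_supIndep.mpr fun s => Finset.SupIndep.subset ?_ Finset.subset_product
  rw [Finset.product_eq_biUnion]
  refine Finset.SupIndep.biUnion ?_ fun i _ => ((h₂ i).supIndep' _).image
  refine (h₁.supIndep' _).mono fun i _ => ?_
  rw [Finset.sup_image]
  exact Finset.sup_le fun j _ => le_iSup (fun j => f (i, j)) j

end Lattice

section LinearMap

variable {R M M₂ ι : Type*} [Ring R] [AddCommGroup M] [Module R M] [AddCommGroup M₂]
  [Module R M₂]

theorem DirectSum.IsInternal.exists_linearEquiv_apply_eq [DecidableEq ι]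
    {A B : ι → Submodule R M} (hA : IsInternal A) (hB : IsInternal B) (e : ∀ i, A i ≃ₗ[R] B i) :
    ∃ g : M ≃ₗ[R] M, ∀ i (x : A i), g x = e i x := by
  let cA := LinearEquiv.ofBijective (coeLinearMap A) hA
  let cB := LinearEquiv.ofBijective (coeLinearMap B) hB
  refine ⟨cA.symm ≪≫ₗ DFinsupp.mapRange.linearEquiv e ≪≫ₗ cB, fun i x => ?_⟩
  have hx : cA.symm x = lof R ι (fun i => A i) i x :=
    cA.symm_apply_eq.mpr (coeLinearMap_of A i x).symm
  have he : DFinsupp.mapRange.linearEquiv e (lof R ι (fun i => A i) i x) =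
      lof R ι (fun i => B i) i (e i x) :=
    DFinsupp.mapRange_single (hf := fun i => map_zero (e i))
  rw [LinearEquiv.trans_apply, LinearEquiv.trans_apply, hx, he]
  exact coeLinearMap_of B i (e i x)

noncomputable def Submodule.equivMapOfDisjointKer (f : M →ₗ[R] M₂) (p : Submodule R M)
    (h : Disjoint p (LinearMap.ker f)) : p ≃ₗ[R] p.map f :=
  LinearEquiv.ofBijective (f.submoduleMap p)
    ⟨LinearMap.submoduleMap_injective_of_injOn (LinearMap.disjoint_ker_iff_injOn.mp h),
      f.submoduleMap_surjective p⟩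

theorem Module.End.map_ker_pow_le_ker_pow (f : Module.End R M) {r c j : ℕ} (h : r ≤ c + j) :
    (LinearMap.ker (f ^ r)).map (f ^ j) ≤ LinearMap.ker (f ^ c) := by
  rintro _ ⟨x, hx, rfl⟩
  rw [LinearMap.mem_ker, ← Module.End.mul_apply, ← pow_add]
  exact f.iterateKer.monotone h hx

end LinearMap

open Module.End

section Eigenspaces

variable {K V : Type*} [Field K] [AddCommGroup V] [Module K V] {f : End K V}

theorem Module.End.maxGenEigenspace_eq_eigenspace_of_iSup_eigenspace_eq_top_s6
    (hf : ⨆ μ, f.eigenspace μ = ⊤) (μ : K) : f.maxGenEigenspace μ = f.eigenspace μ := by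
  have := f.independent_maxGenEigenspace.iSup_inf_eq_of_le
    (fun _ => eigenspace_le_maxGenEigenspace) μ
  rwa [hf, top_inf_eq] at this

theorem Module.End.exists_eigenspace_natCast_pow_mul_eq_bot [CharZero K] [FiniteDimensional K V]
    {q : ℕ} (hq : 1 < q) {μ : K} (hμ : μ ≠ 0) : ∃ n : ℕ, f.eigenspace ((q : K) ^ n * μ) = ⊥ := by
  by_contra! h
  have hinj : Function.Injective fun n : ℕ => (q : K) ^ n * μ := fun a b hab =>
    Nat.pow_right_injective hq (by exact_mod_cast mul_right_cancel₀ hμ hab)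
  exact Set.infinite_of_injective_forall_mem hinj (fun n => hasEigenvalue_iff.mpr (h n))
    f.finite_hasEigenvalue

end Eigenspaces

section Weil

variable {Ω : Type*} [Field Ω] [CharZero Ω] {q : ℕ} {w : ℚ} {α : Ω}

theorem IsWeilNumber.weight_unique [Nonempty (Ω →+* ℂ)] (hq : 1 < q) {w' : ℚ}
    (h : IsWeilNumber q w α) (h' : IsWeilNumber q w' α) : w = w' := by
  obtain ⟨σ⟩ := ‹Nonempty (Ω →+* ℂ)›
  have hpow : (q : ℝ) ^ (w : ℝ) = (q : ℝ) ^ (w' : ℝ) := by rw [← h.2 σ, ← h'.2 σ]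
  have hq' : (1 : ℝ) < q := Nat.one_lt_cast.mpr hq
  exact_mod_cast (Real.rpow_right_inj (by positivity) hq'.ne').mp hpow

theorem IsWeilNumber.ne_zero [Nonempty (Ω →+* ℂ)] (hq : 0 < q) (h : IsWeilNumber q w α) :
    α ≠ 0 := by
  obtain ⟨σ⟩ := ‹Nonempty (Ω →+* ℂ)›
  rintro rfl
  have h0 := h.2 σ
  rw [map_zero, norm_zero, zero_pow two_ne_zero] at h0
  exact (Real.rpow_pos_of_pos (Nat.cast_pos.mpr hq) _).ne' h0.symm

theorem IsWeilNumber.natCast_zpow_mul (hq : 0 < q) (h : IsWeilNumber q w α) (z : ℤ) :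
    IsWeilNumber q (w + 2 * z) ((q : Ω) ^ z * α) := by
  refine ⟨?_, fun σ => ?_⟩
  · have hqz : (q : Ω) ^ z = algebraMap ℚ Ω ((q : ℚ) ^ z) := by simp
    exact hqz ▸ (isAlgebraic_algebraMap _).mul h.1
  · rw [map_mul, norm_mul, map_zpow₀, map_natCast, norm_zpow, Complex.norm_natCast, mul_pow,
      h.2 σ, ← zpow_natCast, ← zpow_mul, ← Real.rpow_intCast,
      ← Real.rpow_add (Nat.cast_pos.mpr hq)]
    push_cast
    ring_nf

theorem IsWeilNumber.natCast_pow_mul (hq : 0 < q) (h : IsWeilNumber q w α) (n : ℕ) :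
    IsWeilNumber q (w + 2 * n) ((q : Ω) ^ n * α) := by
  simpa using h.natCast_zpow_mul hq n

theorem IsWeilNumber.exists_eq_natCast_pow_mul (hq : 0 < q) (h : IsWeilNumber q w α) (j : ℕ) :
    ∃ γ, IsWeilNumber q (w - 2 * j) γ ∧ (q : Ω) ^ j * γ = α := by
  refine ⟨(q : Ω) ^ (-(j : ℤ)) * α, ?_, ?_⟩
  · convert h.natCast_zpow_mul hq (-j) using 1
    push_cast
    ring
  · rw [← mul_assoc, ← zpow_natCast, ← zpow_add₀ (Nat.cast_ne_zero.mpr hq.ne'),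
      add_neg_cancel, zpow_zero, one_mul]

noncomputable def relWeight (q : ℕ) (k : ℚ) (α : Ω) : ℤ :=
  open Classical in if h : ∃ i : ℤ, IsWeilNumber q (k + i) α then h.choose else 0

theorem relWeight_eq [Nonempty (Ω →+* ℂ)] (hq : 1 < q) {k : ℚ} {i : ℤ}
    (h : IsWeilNumber q (k + i) α) : relWeight q k α = i := by
  have hex : ∃ i : ℤ, IsWeilNumber q (k + i) α := ⟨i, h⟩
  rw [relWeight, dif_pos hex]
  exact_mod_cast add_left_cancel (hex.choose_spec.weight_unique hq h)

end Weil

section Monodromy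

variable {Ω V : Type*} [Field Ω] [CharZero Ω] [AddCommGroup V] [Module Ω V]
  {q : ℕ} {φ N : End Ω V} {k w : ℚ} {α : Ω}

theorem WDMixed.subsingleton [IsEmpty (Ω →+* ℂ)] (h : WDMixed q φ) : Subsingleton V := by
  have hconst (w : ℚ) : wdWeightSpace q φ w = wdWeightSpace q φ 0 := by
    simp [wdWeightSpace, IsWeilNumber]
  have hbot : wdWeightSpace q φ 0 = ⊥ := by
    have h01 : Disjoint (wdWeightSpace q φ 0) (wdWeightSpace q φ 1) :=
      h.submodule_iSupIndep.pairwiseDisjoint zero_ne_one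
    rwa [hconst 1, disjoint_self] at h01
  have htop := h.submodule_iSup_eq_top
  simp only [hconst, hbot, iSup_bot] at htop
  exact (Submodule.subsingleton_iff Ω).mp (subsingleton_iff_bot_eq_top.mp htop)

theorem map_eigenspace_le (hq : q ≠ 0) (hrel : N * φ = (q : Ω) • (φ * N)) (α : Ω) :
    (φ.eigenspace (q * α)).map N ≤ φ.eigenspace α := by
  rintro _ ⟨x, hx, rfl⟩
  rw [SetLike.mem_coe, mem_eigenspace_iff] at hx
  rw [mem_eigenspace_iff]
  have h : N (φ x) = (q : Ω) • φ (N x) := by simpa using congr($hrel x)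
  rw [hx, map_smul, mul_smul] at h
  exact smul_right_injective V (Nat.cast_ne_zero.mpr hq) h.symm

theorem map_pow_eigenspace_le (hq : q ≠ 0) (hrel : N * φ = (q : Ω) • (φ * N)) (α : Ω) (j : ℕ) :
    (φ.eigenspace ((q : Ω) ^ j * α)).map (N ^ j) ≤ φ.eigenspace α := by
  induction j generalizing α with
  | zero => simp [one_eq_id]
  | succ j ih =>
    rw [pow_succ N, mul_eq_comp, Submodule.map_comp, pow_succ', mul_assoc]
    exact (Submodule.map_mono (map_eigenspace_le hq hrel _)).trans (ih α)

theorem pow_apply_mem_eigenspace (hq : q ≠ 0) (hrel : N * φ = (q : Ω) • (φ * N)) {x : V}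
    (hx : x ∈ φ.eigenspace α) (j : ℕ) : (N ^ j) x ∈ φ.eigenspace (((q : Ω) ^ j)⁻¹ * α) := by
  refine map_pow_eigenspace_le hq hrel _ j ⟨x, ?_, rfl⟩
  rwa [mul_inv_cancel_left₀ (pow_ne_zero j (Nat.cast_ne_zero.mpr hq))]

theorem eigenspace_le_wdWeightSpace (h : IsWeilNumber q w α) :
    φ.eigenspace α ≤ wdWeightSpace q φ w :=
  eigenspace_le_maxGenEigenspace.trans (le_biSup (fun α => φ.maxGenEigenspace α) h)

theorem wdWeightSpace_eq_iSup_eigenspace (hdiag : ⨆ α, φ.eigenspace α = ⊤) (w : ℚ) :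
    wdWeightSpace q φ w = ⨆ α ∈ {α | IsWeilNumber q w α}, φ.eigenspace α := by
  simp only [wdWeightSpace, maxGenEigenspace_eq_eigenspace_of_iSup_eigenspace_eq_top_s6 hdiag]

namespace WDPure

variable (hp : WDPure q φ N k)
include hp

theorem exists_isWeilNumber (hα : φ.eigenspace α ≠ ⊥) : ∃ i : ℤ, IsWeilNumber q (k + i) α := by
  by_contra! h
  have hle (w : ℚ) : wdWeightSpace q φ w ≤ ⨆ β, ⨆ (_ : β ≠ α), φ.maxGenEigenspace β := by
    by_cases hw : ∃ i : ℤ, w = k + i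
    · obtain ⟨i, rfl⟩ := hw
      exact iSup₂_le fun β hβ => le_iSup₂_of_le β (fun hβα => h i (hβα ▸ hβ)) le_rfl
    · rw [hp.2.1 w hw]
      exact bot_le
  have htop := hp.1.submodule_iSup_eq_top ▸ iSup_le hle
  refine hα (eq_bot_iff.mpr (eigenspace_le_maxGenEigenspace.trans ?_))
  exact ((φ.independent_maxGenEigenspace α).eq_bot_of_le (le_top.trans htop)).le

theorem disjoint_eigenspace_ker_pow {m : ℕ} (hα : IsWeilNumber q (k + m) α) :
    Disjoint (φ.eigenspace α) (LinearMap.ker (N ^ m)) := by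
  rcases Nat.eq_zero_or_pos m with rfl | hm
  · simp [one_eq_id]
  rw [LinearMap.disjoint_ker]
  intro x hx hNx
  refine (hp.2.2 m (by exact_mod_cast hm)).1 x ?_ (by simpa using hNx)
  exact eigenspace_le_wdWeightSpace (by exact_mod_cast hα) hx

/- `N^m` maps `V_{k+m} = ⨆ E_{q^m γ}` (over `γ` of weight `k - m`) onto `V_{k-m}`, each
`E_{q^m γ}` landing in `E_γ`; independence of the eigenspaces isolates the component at `α`. -/
theorem map_pow_eigenspace_eq (hq : 0 < q) (hdiag : ⨆ α, φ.eigenspace α = ⊤)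
    (hrel : N * φ = (q : Ω) • (φ * N)) {m : ℕ} (hα : IsWeilNumber q (k - m) α) :
    (φ.eigenspace ((q : Ω) ^ m * α)).map (N ^ m) = φ.eigenspace α := by
  refine le_antisymm (map_pow_eigenspace_le hq.ne' hrel α m) ?_
  rcases Nat.eq_zero_or_pos m with rfl | hm
  · simp [one_eq_id]
  let C (γ : Ω) : Submodule Ω V :=
    ⨆ (_ : IsWeilNumber q (k - m) γ), (φ.eigenspace ((q : Ω) ^ m * γ)).map (N ^ m)
  have hup : wdWeightSpace q φ (k + m) ≤
      ⨆ γ, ⨆ (_ : IsWeilNumber q (k - m) γ), φ.eigenspace ((q : Ω) ^ m * γ) := by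
    rw [wdWeightSpace_eq_iSup_eigenspace hdiag]
    refine iSup₂_le fun β hβ => ?_
    obtain ⟨γ, hγ, rfl⟩ := IsWeilNumber.exists_eq_natCast_pow_mul hq hβ m
    exact le_iSup₂_of_le γ (by convert hγ using 1; ring) le_rfl
  have hle : φ.eigenspace α ≤ ⨆ γ, C γ := calc
    φ.eigenspace α ≤ wdWeightSpace q φ (k - m) := eigenspace_le_wdWeightSpace hα
    _ = (wdWeightSpace q φ (k + m)).map (N ^ m) := by
      simpa using (hp.2.2 m (by exact_mod_cast hm)).2.symm
    _ ≤ ⨆ γ, C γ := by simpa only [Submodule.map_iSup] using Submodule.map_mono (f := N ^ m) hup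
  have hC (γ : Ω) : C γ ≤ φ.eigenspace γ :=
    iSup_le fun _ => map_pow_eigenspace_le hq.ne' hrel γ m
  calc φ.eigenspace α = (⨆ γ, C γ) ⊓ φ.eigenspace α := (inf_eq_right.mpr hle).symm
    _ = C α := φ.eigenspaces_iSupIndep.iSup_inf_eq_of_le hC α
    _ ≤ _ := iSup_le fun _ => le_rfl

end WDPure

-- For `relWeight q k α < 0` the exponent truncates to `0`, so this is `⊥`.
variable (q φ N k) in
noncomputable def primitiveSubspace (α : Ω) : Submodule Ω V :=
  φ.eigenspace α ⊓ LinearMap.ker (N ^ (relWeight q k α + 1).toNat)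

variable (q φ N k) in
noncomputable def lefschetzPiece (β : Ω) (j : ℕ) : Submodule Ω V :=
  (primitiveSubspace q φ N k β).map (N ^ j)

theorem primitiveSubspace_le_eigenspace : primitiveSubspace q φ N k α ≤ φ.eigenspace α :=
  inf_le_left

theorem primitiveSubspace_eq [Nonempty (Ω →+* ℂ)] (hq : 1 < q) {n : ℕ}
    (hα : IsWeilNumber q (k + n) α) :
    primitiveSubspace q φ N k α = φ.eigenspace α ⊓ LinearMap.ker (N ^ (n + 1)) := by
  rw [primitiveSubspace, relWeight_eq hq (i := n) (by exact_mod_cast hα),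
    show ((n : ℤ) + 1).toNat = n + 1 by omega]

theorem primitiveSubspace_eq_bot (h : relWeight q k α < 0) : primitiveSubspace q φ N k α = ⊥ := by
  rw [primitiveSubspace, show (relWeight q k α + 1).toNat = 0 by omega]
  simp [one_eq_id]

theorem primitiveSubspace_le_ker_pow {c : ℕ} (h : relWeight q k α + 1 ≤ c) :
    primitiveSubspace q φ N k α ≤ LinearMap.ker (N ^ c) :=
  inf_le_right.trans (N.iterateKer.monotone (by omega))

theorem lefschetzPiece_zero (β : Ω) :
    lefschetzPiece q φ N k β 0 = primitiveSubspace q φ N k β := by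
  simp [lefschetzPiece, one_eq_id]

theorem map_lefschetzPiece (β : Ω) (j : ℕ) :
    (lefschetzPiece q φ N k β j).map N = lefschetzPiece q φ N k β (j + 1) := by
  rw [lefschetzPiece, lefschetzPiece, ← Submodule.map_comp, ← mul_eq_comp, pow_succ']

theorem lefschetzPiece_le_eigenspace (hq : q ≠ 0) (hrel : N * φ = (q : Ω) • (φ * N)) (α : Ω)
    (j : ℕ) : lefschetzPiece q φ N k ((q : Ω) ^ j * α) j ≤ φ.eigenspace α :=
  (Submodule.map_mono primitiveSubspace_le_eigenspace).trans (map_pow_eigenspace_le hq hrel α j)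

theorem lefschetzPiece_le_ker_pow {β : Ω} {j c : ℕ} (h : relWeight q k β + 1 ≤ c + j) :
    lefschetzPiece q φ N k β j ≤ LinearMap.ker (N ^ c) :=
  (Submodule.map_mono inf_le_right).trans (N.map_ker_pow_le_ker_pow (by omega))

theorem lefschetzPiece_eq_bot {β : Ω} {j : ℕ} (h : relWeight q k β < j) :
    lefschetzPiece q φ N k β j = ⊥ := by
  simpa [one_eq_id] using lefschetzPiece_le_ker_pow (φ := φ) (N := N) (c := 0) (by omega)

namespace WDPure

theorem eigenspace_le_map_of_neg (hp : WDPure q φ N k) (hq : 0 < q)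
    (hdiag : ⨆ α, φ.eigenspace α = ⊤) (hrel : N * φ = (q : Ω) • (φ * N)) {m : ℕ}
    (hα : IsWeilNumber q (k - (m + 1 : ℕ)) α) :
    φ.eigenspace α ≤ (φ.eigenspace (q * α)).map N := by
  rw [← hp.map_pow_eigenspace_eq hq hdiag hrel hα, pow_succ' N, mul_eq_comp, Submodule.map_comp,
    pow_succ, mul_assoc]
  exact Submodule.map_mono (map_pow_eigenspace_le hq.ne' hrel _ m)

/- Write `α = q^{n+1} γ`. Surjectivity of `N^{n+2} : E_{qα} → E_γ` gives `z` with
`N^{n+1} x = N^{n+2} z`, and then `x - N z` is primitive. -/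
theorem eigenspace_le_primitiveSubspace_sup_of_nonneg [Nonempty (Ω →+* ℂ)]
    (hp : WDPure q φ N k) (hq : 1 < q) (hdiag : ⨆ α, φ.eigenspace α = ⊤)
    (hrel : N * φ = (q : Ω) • (φ * N)) {n : ℕ} (hα : IsWeilNumber q (k + n) α) :
    φ.eigenspace α ≤ primitiveSubspace q φ N k α ⊔ (φ.eigenspace (q * α)).map N := by
  have hq0 : q ≠ 0 := by omega
  rw [primitiveSubspace_eq hq hα]
  intro x hx
  obtain ⟨γ, hγ, rfl⟩ := hα.exists_eq_natCast_pow_mul (by omega) (n + 1)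
  have hNx : (N ^ (n + 1)) x ∈ φ.eigenspace γ :=
    map_pow_eigenspace_le hq0 hrel γ (n + 1) ⟨x, hx, rfl⟩
  rw [← hp.map_pow_eigenspace_eq (by omega) hdiag hrel (m := n + 2)
    (by convert hγ using 1; push_cast; ring)] at hNx
  obtain ⟨z, hz, hzx⟩ := hNx
  rw [pow_succ', mul_assoc] at hz
  refine Submodule.mem_sup.mpr ⟨x - N z, ⟨sub_mem hx ?_, ?_⟩, N z, ⟨z, hz, rfl⟩, sub_add_cancel x _⟩
  · exact map_eigenspace_le hq0 hrel _ ⟨z, hz, rfl⟩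
  · rw [SetLike.mem_coe, LinearMap.mem_ker, map_sub, ← mul_apply, ← pow_succ, hzx, sub_self]

theorem eigenspace_eq_primitiveSubspace_sup [Nonempty (Ω →+* ℂ)] (hp : WDPure q φ N k)
    (hq : 1 < q) (hdiag : ⨆ α, φ.eigenspace α = ⊤) (hrel : N * φ = (q : Ω) • (φ * N)) (α : Ω) :
    φ.eigenspace α = primitiveSubspace q φ N k α ⊔ (φ.eigenspace (q * α)).map N := by
  refine le_antisymm ?_
    (sup_le primitiveSubspace_le_eigenspace (map_eigenspace_le (by omega) hrel α))
  by_cases hα : φ.eigenspace α = ⊥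
  · simp [hα]
  obtain ⟨i, hi⟩ := hp.exists_isWeilNumber hα
  rcases lt_or_ge i 0 with hneg | hnonneg
  · obtain ⟨m, rfl⟩ : ∃ m : ℕ, i = -(m + 1 : ℕ) := ⟨(-i - 1).toNat, by omega⟩
    refine le_sup_of_le_right (hp.eigenspace_le_map_of_neg (m := m) (by omega) hdiag hrel ?_)
    convert hi using 1
    push_cast
    ring
  · lift i to ℕ using hnonneg
    exact hp.eigenspace_le_primitiveSubspace_sup_of_nonneg hq hdiag hrel hi

theorem finrank_eigenspace_eq [Nonempty (Ω →+* ℂ)] [FiniteDimensional Ω V] (hp : WDPure q φ N k)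
    (hq : 1 < q) (hdiag : ⨆ α, φ.eigenspace α = ⊤) (hrel : N * φ = (q : Ω) • (φ * N)) {n : ℕ}
    (hα : IsWeilNumber q (k + n) α) :
    finrank Ω (φ.eigenspace α) =
      finrank Ω (primitiveSubspace q φ N k α) + finrank Ω (φ.eigenspace (q * α)) := by
  have hqα : Disjoint (φ.eigenspace (q * α)) (LinearMap.ker (N ^ (n + 2))) :=
    hp.disjoint_eigenspace_ker_pow
      (by convert hα.natCast_pow_mul (by omega) 1 using 1 <;> push_cast <;> ring)
  have hinj : Disjoint (φ.eigenspace (q * α)) (LinearMap.ker N) :=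
    hqα.mono_right (by simpa using N.iterateKer.monotone (by omega : 1 ≤ n + 2))
  have hdisj : Disjoint (primitiveSubspace q φ N k α) ((φ.eigenspace (q * α)).map N) := by
    rw [primitiveSubspace_eq hq hα, Submodule.disjoint_def]
    rintro _ hP ⟨y, hy, rfl⟩
    have hNy : (N ^ (n + 2)) y = 0 := by simpa [pow_succ, mul_apply] using hP.2
    rw [Submodule.disjoint_def.mp hqα y hy hNy, map_zero]
  have hsum := Submodule.finrank_sup_add_finrank_inf_eq (primitiveSubspace q φ N k α)
    ((φ.eigenspace (q * α)).map N)
  rw [hdisj.eq_bot, finrank_bot, add_zero] at hsum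
  rw [hp.eigenspace_eq_primitiveSubspace_sup hq hdiag hrel α, hsum,
    ← (Submodule.equivMapOfDisjointKer N _ hinj).finrank_eq]

theorem finrank_primitiveSubspace_eq [Nonempty (Ω →+* ℂ)] [FiniteDimensional Ω V]
    {N' : End Ω V} (hp : WDPure q φ N k) (hp' : WDPure q φ N' k) (hq : 1 < q)
    (hdiag : ⨆ α, φ.eigenspace α = ⊤) (hrel : N * φ = (q : Ω) • (φ * N))
    (hrel' : N' * φ = (q : Ω) • (φ * N')) (α : Ω) :
    finrank Ω (primitiveSubspace q φ N k α) = finrank Ω (primitiveSubspace q φ N' k α) := by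
  by_cases hα : φ.eigenspace α = ⊥
  · have hbot (M : End Ω V) : primitiveSubspace q φ M k α = ⊥ :=
      eq_bot_iff.mpr (hα ▸ primitiveSubspace_le_eigenspace)
    rw [hbot N, hbot N']
  obtain ⟨i, hi⟩ := hp.exists_isWeilNumber hα
  rcases lt_or_ge i 0 with hneg | hnonneg
  · rw [primitiveSubspace_eq_bot, primitiveSubspace_eq_bot] <;> rwa [relWeight_eq hq hi]
  · lift i to ℕ using hnonneg
    have h := hp.finrank_eigenspace_eq hq hdiag hrel hi
    have h' := hp'.finrank_eigenspace_eq hq hdiag hrel' hi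
    omega

theorem eigenspace_le_iSup_lefschetzPiece [Nonempty (Ω →+* ℂ)] (hp : WDPure q φ N k)
    (hq : 1 < q) (hdiag : ⨆ α, φ.eigenspace α = ⊤) (hrel : N * φ = (q : Ω) • (φ * N)) (n : ℕ)
    (α : Ω) (hn : φ.eigenspace ((q : Ω) ^ n * α) = ⊥) :
    φ.eigenspace α ≤ ⨆ p : Ω × ℕ, lefschetzPiece q φ N k p.1 p.2 := by
  induction n generalizing α with
  | zero => simp_all
  | succ n ih =>
    rw [hp.eigenspace_eq_primitiveSubspace_sup hq hdiag hrel α]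
    refine sup_le (le_iSup_of_le (α, 0) (lefschetzPiece_zero α).ge) ?_
    calc (φ.eigenspace (q * α)).map N
        ≤ (⨆ p : Ω × ℕ, lefschetzPiece q φ N k p.1 p.2).map N :=
          Submodule.map_mono (ih _ (by rwa [← mul_assoc, ← pow_succ]))
      _ = ⨆ p : Ω × ℕ, lefschetzPiece q φ N k p.1 (p.2 + 1) := by
          simp only [Submodule.map_iSup, map_lefschetzPiece]
      _ ≤ _ := iSup_le fun p => le_iSup_of_le (p.1, p.2 + 1) le_rfl

theorem iSup_lefschetzPiece_eq_top [Nonempty (Ω →+* ℂ)] [FiniteDimensional Ω V]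
    (hp : WDPure q φ N k) (hq : 1 < q) (hdiag : ⨆ α, φ.eigenspace α = ⊤)
    (hrel : N * φ = (q : Ω) • (φ * N)) :
    ⨆ p : Ω × ℕ, lefschetzPiece q φ N k p.1 p.2 = ⊤ := by
  refine eq_top_iff.mpr (hdiag ▸ iSup_le fun α => ?_)
  by_cases hα : φ.eigenspace α = ⊥
  · simp [hα]
  obtain ⟨i, hi⟩ := hp.exists_isWeilNumber hα
  obtain ⟨n, hn⟩ := φ.exists_eigenspace_natCast_pow_mul_eq_bot hq (hi.ne_zero (by omega))
  exact hp.eigenspace_le_iSup_lefschetzPiece hq hdiag hrel n α hn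

/- With `α` of weight `k + i`, the power `N^{i+n}` kills every lower piece but is injective on
the `n`-th one. -/
theorem disjoint_lefschetzPiece_iSup_lt [Nonempty (Ω →+* ℂ)] (hp : WDPure q φ N k) (hq : 1 < q)
    (hrel : N * φ = (q : Ω) • (φ * N)) (α : Ω) (n : ℕ) :
    Disjoint (lefschetzPiece q φ N k ((q : Ω) ^ n * α) n)
      (⨆ j < n, lefschetzPiece q φ N k ((q : Ω) ^ j * α) j) := by
  by_cases hα : φ.eigenspace α = ⊥
  · exact disjoint_bot_left.mono_left
      ((lefschetzPiece_le_eigenspace (by omega) hrel α n).trans hα.le)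
  obtain ⟨i, hi⟩ := hp.exists_isWeilNumber hα
  have hw (j : ℕ) : IsWeilNumber q (k + (i + 2 * j : ℤ)) ((q : Ω) ^ j * α) := by
    convert hi.natCast_pow_mul (by omega) j using 1
    push_cast
    ring
  have hrw (j : ℕ) := relWeight_eq hq (hw j)
  rcases lt_or_ge (i + n) 0 with hneg | hnonneg
  · rw [lefschetzPiece_eq_bot (by rw [hrw]; omega)]
    exact disjoint_bot_left
  obtain ⟨c, hc⟩ : ∃ c : ℕ, (c : ℤ) = i + n := ⟨(i + n).toNat, by omega⟩
  refine Disjoint.mono_right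
    (iSup₂_le fun j hj => lefschetzPiece_le_ker_pow (c := c) (by rw [hrw]; omega)) ?_
  have hwt : ((c + n : ℕ) : ℚ) = ((i + 2 * n : ℤ) : ℚ) := by
    exact_mod_cast (by omega : ((c + n : ℕ) : ℤ) = i + 2 * n)
  have hinj := hp.disjoint_eigenspace_ker_pow (m := c + n) (hwt ▸ hw n)
  rw [LinearMap.disjoint_ker]
  rintro _ ⟨x, hx, rfl⟩ hx0
  rw [Submodule.disjoint_def.mp hinj x hx.1
    (LinearMap.mem_ker.mpr (by rwa [pow_add, mul_apply])), map_zero]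

theorem iSupIndep_lefschetzPiece [Nonempty (Ω →+* ℂ)] (hp : WDPure q φ N k) (hq : 1 < q)
    (hrel : N * φ = (q : Ω) • (φ * N)) :
    iSupIndep fun p : Ω × ℕ => lefschetzPiece q φ N k p.1 p.2 := by
  have hq0 : (q : Ω) ≠ 0 := Nat.cast_ne_zero.mpr (by omega)
  have hsurj : Function.Surjective fun p : Ω × ℕ => ((q : Ω) ^ p.2 * p.1, p.2) :=
    fun p => ⟨(((q : Ω) ^ p.2)⁻¹ * p.1, p.2),
      Prod.ext (mul_inv_cancel_left₀ (pow_ne_zero _ hq0) _) rfl⟩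
  -- after reindexing, the pieces with first coordinate `α` all lie in `E_α`
  have hprod : iSupIndep fun p : Ω × ℕ => lefschetzPiece q φ N k ((q : Ω) ^ p.2 * p.1) p.2 := by
    refine iSupIndep_prod ?_ fun α =>
      iSupIndep_of_disjoint_iSup_lt (hp.disjoint_lefschetzPiece_iSup_lt hq hrel α)
    exact φ.eigenspaces_iSupIndep.mono fun α =>
      iSup_le fun j => lefschetzPiece_le_eigenspace (by omega) hrel α j
  exact hprod.comp' hsurj

open Classical in
theorem isInternal_lefschetzPiece [Nonempty (Ω →+* ℂ)] [FiniteDimensional Ω V]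
    (hp : WDPure q φ N k) (hq : 1 < q) (hdiag : ⨆ α, φ.eigenspace α = ⊤)
    (hrel : N * φ = (q : Ω) • (φ * N)) :
    DirectSum.IsInternal fun p : {p : Ω × ℕ // (p.2 : ℤ) ≤ relWeight q k p.1} =>
      lefschetzPiece q φ N k p.1.1 p.1.2 := by
  refine DirectSum.isInternal_submodule_of_iSupIndep_of_iSup_eq_top
    ((hp.iSupIndep_lefschetzPiece hq hrel).comp Subtype.val_injective) (eq_top_iff.mpr ?_)
  rw [← hp.iSup_lefschetzPiece_eq_top hq hdiag hrel]
  refine iSup_le fun p => ?_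
  by_cases h : (p.2 : ℤ) ≤ relWeight q k p.1
  · exact le_iSup_of_le ⟨p, h⟩ le_rfl
  · rw [lefschetzPiece_eq_bot (by omega)]
    exact bot_le

theorem disjoint_primitiveSubspace_ker_pow [Nonempty (Ω →+* ℂ)] (hp : WDPure q φ N k)
    (hq : 1 < q) {β : Ω} {j : ℕ} (hj : (j : ℤ) ≤ relWeight q k β) :
    Disjoint (primitiveSubspace q φ N k β) (LinearMap.ker (N ^ j)) := by
  by_cases hβ : φ.eigenspace β = ⊥
  · exact disjoint_bot_left.mono_left (hβ ▸ primitiveSubspace_le_eigenspace)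
  obtain ⟨i, hi⟩ := hp.exists_isWeilNumber hβ
  rw [relWeight_eq hq hi] at hj
  lift i to ℕ using (by omega)
  exact (hp.disjoint_eigenspace_ker_pow hi).mono primitiveSubspace_le_eigenspace
    (N.iterateKer.monotone (by omega))

theorem ext_lefschetzPiece [Nonempty (Ω →+* ℂ)] [FiniteDimensional Ω V] (hp : WDPure q φ N k)
    (hq : 1 < q) (hdiag : ⨆ α, φ.eigenspace α = ⊤) (hrel : N * φ = (q : Ω) • (φ * N))
    {f₁ f₂ : End Ω V} (h : ∀ β (j : ℕ), (j : ℤ) ≤ relWeight q k β →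
      ∀ x ∈ primitiveSubspace q φ N k β, f₁ ((N ^ j) x) = f₂ ((N ^ j) x)) : f₁ = f₂ := by
  classical
  have hle : (⨆ p : {p : Ω × ℕ // (p.2 : ℤ) ≤ relWeight q k p.1},
      lefschetzPiece q φ N k p.1.1 p.1.2) ≤ LinearMap.eqLocus f₁ f₂ :=
    iSup_le fun p => by
      rintro _ ⟨x, hx, rfl⟩
      exact h _ _ p.2 x hx
  exact LinearMap.ext fun v =>
    hle ((hp.isInternal_lefschetzPiece hq hdiag hrel).submodule_iSup_eq_top ▸ Submodule.mem_top)

theorem exists_linearEquiv_pow_apply [Nonempty (Ω →+* ℂ)] [FiniteDimensional Ω V]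
    {N' : End Ω V} (hp : WDPure q φ N k) (hp' : WDPure q φ N' k) (hq : 1 < q)
    (hdiag : ⨆ α, φ.eigenspace α = ⊤) (hrel : N * φ = (q : Ω) • (φ * N))
    (hrel' : N' * φ = (q : Ω) • (φ * N'))
    (e : ∀ β, primitiveSubspace q φ N k β ≃ₗ[Ω] primitiveSubspace q φ N' k β) :
    ∃ g : V ≃ₗ[Ω] V, ∀ β (j : ℕ), (j : ℤ) ≤ relWeight q k β →
      ∀ x : primitiveSubspace q φ N k β, g ((N ^ j) x) = (N' ^ j) (e β x) := by
  classical
  let lift (p : {p : Ω × ℕ // (p.2 : ℤ) ≤ relWeight q k p.1}) (M : End Ω V)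
      (hM : WDPure q φ M k) :
      primitiveSubspace q φ M k p.1.1 ≃ₗ[Ω] lefschetzPiece q φ M k p.1.1 p.1.2 :=
    Submodule.equivMapOfDisjointKer (M ^ p.1.2) _ (hM.disjoint_primitiveSubspace_ker_pow hq p.2)
  obtain ⟨g, hg⟩ := (hp.isInternal_lefschetzPiece hq hdiag hrel).exists_linearEquiv_apply_eq
    (hp'.isInternal_lefschetzPiece hq hdiag hrel') fun p =>
      (lift p N hp).symm ≪≫ₗ e p.1.1 ≪≫ₗ lift p N' hp'
  refine ⟨g, fun β j hj x => ?_⟩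
  have := hg ⟨(β, j), hj⟩ (lift ⟨(β, j), hj⟩ N hp x)
  rwa [LinearEquiv.trans_apply, LinearEquiv.trans_apply, LinearEquiv.symm_apply_apply] at this

end WDPure

end Monodromy

theorem statement6_general {Ω V : Type*} [Field Ω] [CharZero Ω]
    [AddCommGroup V] [Module Ω V] [FiniteDimensional Ω V]
    (q : ℕ) (hq : 2 ≤ q) (φ N N' : Module.End Ω V)
    (hdiag : (⨆ α : Ω, φ.eigenspace α) = ⊤)
    (hrel : N * φ = (q : Ω) • (φ * N)) (hrel' : N' * φ = (q : Ω) • (φ * N'))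
    (k : ℚ) (hNpure : WDPure q φ N k) (hN'pure : WDPure q φ N' k) :
    ∃ g : Module.End Ω V, IsUnit g ∧ g * φ = φ * g ∧ g * N = N' * g := by
  rcases isEmpty_or_nonempty (Ω →+* ℂ) with hσ | hσ
  · have := hNpure.1.subsingleton
    exact ⟨1, isUnit_one, Subsingleton.elim _ _, Subsingleton.elim _ _⟩
  let e (β : Ω) := LinearEquiv.ofFinrankEq _ _
    (hNpure.finrank_primitiveSubspace_eq hN'pure hq hdiag hrel hrel' β)
  obtain ⟨g, hg⟩ := hNpure.exists_linearEquiv_pow_apply hN'pure hq hdiag hrel hrel' e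
  refine ⟨g, (End.isUnit_iff _).mpr g.bijective, ?_, ?_⟩ <;>
    refine hNpure.ext_lefschetzPiece hq hdiag hrel fun β j hj x hx => ?_
  · have hq0 : q ≠ 0 := by omega
    have hNx := pow_apply_mem_eigenspace hq0 hrel (primitiveSubspace_le_eigenspace hx) j
    have hN'y := pow_apply_mem_eigenspace hq0 hrel'
      (primitiveSubspace_le_eigenspace (e β ⟨x, hx⟩).2) j
    rw [mul_apply, mul_apply, mem_eigenspace_iff.mp hNx, map_smul, LinearEquiv.coe_coe,
      hg β j hj ⟨x, hx⟩, mem_eigenspace_iff.mp hN'y]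
  · rw [mul_apply, mul_apply, ← mul_apply N, ← pow_succ', LinearEquiv.coe_coe, hg β j hj ⟨x, hx⟩,
      ← mul_apply N', ← pow_succ']
    -- at the top of a chain both sides vanish
    rcases hj.lt_or_eq with hlt | heq
    · exact hg β (j + 1) (by omega) ⟨x, hx⟩
    · rw [primitiveSubspace_le_ker_pow (by omega) hx,
        primitiveSubspace_le_ker_pow (by omega) (e β ⟨x, hx⟩).2, map_zero]

/-- Let `φ` be a diagonalizable invertible endomorphism and let `N`, `N'`
both satisfy the Weil–Deligne commutation relation with `φ`.  If `(φ, N)` and `(φ, N')`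
are both pure of weight `k`, then there is an invertible `g` commuting with `φ` and
intertwining `N` with `N'`:  given a semisimple Frobenius there is, up to equivalence, at
most one monodromy operator making the representation pure. -/
theorem statement6 {Ω V : Type*} [Field Ω] [CharZero Ω] [IsAlgClosed Ω]
    [AddCommGroup V] [Module Ω V] [FiniteDimensional Ω V]
    (q : ℕ) (hq : 2 ≤ q) (φ N N' : Module.End Ω V)
    (hφ : IsUnit φ) (hdiag : (⨆ α : Ω, φ.eigenspace α) = ⊤)
    (hrel : N * φ = (q : Ω) • (φ * N)) (hrel' : N' * φ = (q : Ω) • (φ * N'))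
    (k : ℚ) (hNpure : WDPure q φ N k) (hN'pure : WDPure q φ N' k) :
    ∃ g : Module.End Ω V, IsUnit g ∧ g * φ = φ * g ∧ g * N = N' * g :=
  statement6_general q hq φ N N' hdiag hrel hrel' k hNpure hN'pure
end

section
/- Let (φ, N) be a Weil–Deligne pair on a finite-dimensional Ω-vector space V with φ diagonalizable, and suppose (φ, N) is pure of weight k ∈ ℚ. For each integer i ≥ 0 set P(i) := V_{k+i} ∩ ker(N^{i+1}). Then: (a) for all integers 0 ≤ j ≤ i, the map N^j is injective on P(i) and N^j(P(i)) ⊆ V_{k+i−2j}; and (b) V is the internal direct sum of the family of subspaces N^j(P(i)) indexed by pairs of integers (i, j) with 0 ≤ j ≤ i. (The primitive decomposition of a pure Frobenius-semisimple Weil–Deligne representation, established in the proof of Lemma 1.2.) -/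
open Module

/-!
`N` lowers weights by `2`: the relation `N φ = q φ N` sends the generalized `α`-eigenspace
of `φ` into the `α/q`-one, and `α ↦ α/q` turns Weil `q^w`-numbers into Weil `q^(w-2)`-numbers.
Purity makes `N^i` injective on `V_{k+i}`, hence `N^j` injective on `P(i)` for `j ≤ i`.

Independence: the piece `N^j P(i)` lies in `V_{k+i-2j}` and the weight spaces are independent,
so it suffices to separate the pieces of one weight. On those, `N^(i-j)` kills every piece with
a smaller `j` and is injective on `N^j P(i)`. Spanning: surjectivity of `N^(n+2)` onto
`V_{k-n-2}` gives `V_{k+n} = P(n) + N V_{k+n+2}`, so descending induction from the (finitely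
many) top weights puts every `V_{k+n}` in the span of the pieces, and `V_{k-n} = N^n V_{k+n}`.
-/

section Independence

variable {R M : Type*} [Ring R] [AddCommGroup M] [Module R M]

theorem iSupIndep_of_iSupIndep_fibers {ι κ : Type*} {A : ι → Submodule R M}
    {B : κ → Submodule R M} {f : ι → κ} (hB : iSupIndep B) (hAB : ∀ i, A i ≤ B (f i))
    (hA : ∀ c, iSupIndep fun i : {i // f i = c} => A i) : iSupIndep A := by
  classical
  rw [iSupIndep_iff_finsetSum_eq_zero_imp_eq_zero] at hB ⊢
  intro s v hv hsum i hi
  have hfiber : ∀ c ∈ s.image f, ∑ j ∈ s with f j = c, v j = 0 := by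
    refine hB _ _ (fun c _ => Submodule.sum_mem _ fun j hj => ?_) ?_
    · obtain ⟨hjs, rfl⟩ := Finset.mem_filter.1 hj
      exact hAB j (hv j hjs)
    · rwa [Finset.sum_fiberwise_of_maps_to fun j hj => Finset.mem_image_of_mem f hj]
  refine (iSupIndep_iff_finsetSum_eq_zero_imp_eq_zero _).1 (hA (f i)) (s.subtype (f · = f i))
    (fun j => v j) (fun j hj => hv j (Finset.mem_subtype.1 hj)) ?_ ⟨i, rfl⟩
    (Finset.mem_subtype.2 hi)
  rw [Finset.sum_subtype_eq_sum_filter]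
  exact hfiber _ (Finset.mem_image_of_mem f hi)

/-- A triangularity criterion: apply `L i` to a vanishing sum, where `i` maximizes `g` among the
nonzero terms. -/
theorem iSupIndep_of_map_eq_zero_of_le {ι α : Type*} [LinearOrder α] {C : ι → Submodule R M}
    (g : ι → α) (L : ι → M →ₗ[R] M) (hinj : ∀ i, ∀ x ∈ C i, L i x = 0 → x = 0)
    (hkill : ∀ i i', i' ≠ i → g i' ≤ g i → ∀ x ∈ C i', L i x = 0) : iSupIndep C := by
  classical
  rw [iSupIndep_iff_finsetSum_eq_zero_imp_eq_zero]
  intro s v hv hsum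
  by_contra! hne
  obtain ⟨i, hi, hmax⟩ := Finset.exists_max_image (s.filter (v · ≠ 0)) g
    (Finset.filter_nonempty_iff.2 hne)
  obtain ⟨his, hvi⟩ := Finset.mem_filter.1 hi
  refine hvi (hinj i _ (hv i his) ?_)
  have hLsum := congrArg (L i) hsum
  rwa [map_sum, map_zero, Finset.sum_eq_single_of_mem i his fun j hjs hji => ?_] at hLsum
  by_cases hvj : v j = 0
  · rw [hvj, map_zero]
  · exact hkill i j hji (hmax j (Finset.mem_filter.2 ⟨hjs, hvj⟩)) _ (hv j hjs)

theorem Submodule.map_pow_le_of_map_le {f : Module.End R M} {p : Submodule R M}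
    (h : p.map f ≤ p) (m : ℕ) : p.map (f ^ m) ≤ p := by
  induction m with
  | zero => simp [Module.End.one_eq_id]
  | succ m ih =>
    rw [pow_succ', Module.End.mul_eq_comp, Submodule.map_comp]
    exact (Submodule.map_mono ih).trans h

end Independence

section WeilDeligne

variable {Ω V : Type*} [Field Ω] [CharZero Ω] [AddCommGroup V] [Module Ω V]
  {q : ℕ} {φ N : Module.End Ω V}

theorem IsWeilNumber.div_natCast (hq : q ≠ 0) {w : ℚ} {α : Ω} (h : IsWeilNumber q w α) :
    IsWeilNumber q (w - 2) (α / q) := by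
  obtain ⟨halg, habs⟩ := h
  refine ⟨?_, fun σ => ?_⟩
  · have : α / q = ((q : ℚ)⁻¹) • α := by
      rw [Rat.smul_def, div_eq_inv_mul]; push_cast; rfl
    exact this ▸ halg.smul _
  · have hq' : (0 : ℝ) < q := by positivity
    rw [map_div₀, map_natCast, norm_div, div_pow, habs σ, Complex.norm_natCast, Rat.cast_sub,
      Rat.cast_ofNat, Real.rpow_sub hq', Real.rpow_two]

theorem map_maxGenEigenspace_le_div (hq : q ≠ 0) (hrel : N * φ = (q : Ω) • (φ * N))
    (α : Ω) :
    (φ.maxGenEigenspace α).map N ≤ φ.maxGenEigenspace (α / q) := by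
  have hq' : (q : Ω) ≠ 0 := Nat.cast_ne_zero.2 hq
  have hsemi : SemiconjBy N (φ - α • 1) ((q : Ω) • (φ - (α / q) • 1)) := by
    rw [SemiconjBy, mul_sub, hrel, smul_sub, sub_mul, smul_smul, mul_div_cancel₀ _ hq',
      smul_mul_assoc, smul_mul_assoc, one_mul, mul_smul_comm, mul_one]
  rintro _ ⟨x, hx, rfl⟩
  obtain ⟨n, hn⟩ := (φ.mem_maxGenEigenspace α x).1 hx
  refine (φ.mem_maxGenEigenspace _ _).2 ⟨n, ?_⟩
  have hpow := congrArg (· x) (hsemi.pow_right n).eq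
  simp only [Module.End.mul_apply, hn, map_zero, smul_pow, LinearMap.smul_apply] at hpow
  exact (smul_eq_zero.1 hpow.symm).resolve_left (pow_ne_zero _ hq')

theorem map_wdWeightSpace_le (hq : q ≠ 0) (hrel : N * φ = (q : Ω) • (φ * N)) (w : ℚ) :
    (wdWeightSpace q φ w).map N ≤ wdWeightSpace q φ (w - 2) := by
  simp only [wdWeightSpace, Submodule.map_iSup, iSup_le_iff]
  intro α hα
  exact (map_maxGenEigenspace_le_div hq hrel α).trans
    (le_iSup₂_of_le (f := fun β (_ : β ∈ {β | IsWeilNumber q (w - 2) β}) =>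
      φ.maxGenEigenspace β) (α / q) (hα.div_natCast hq) le_rfl)

theorem map_pow_wdWeightSpace_le (hq : q ≠ 0) (hrel : N * φ = (q : Ω) • (φ * N)) (w : ℚ)
    (m : ℕ) : (wdWeightSpace q φ w).map (N ^ m) ≤ wdWeightSpace q φ (w - 2 * m) := by
  induction m with
  | zero => simp [Module.End.one_eq_id]
  | succ m ih =>
    rw [pow_succ', Module.End.mul_eq_comp, Submodule.map_comp]
    refine (Submodule.map_mono ih).trans ((map_wdWeightSpace_le hq hrel _).trans_eq ?_)
    congr 1
    push_cast
    ring

variable (q φ N) in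
noncomputable def primitivePart (k : ℚ) (i : ℕ) : Submodule Ω V :=
  wdWeightSpace q φ (k + i) ⊓ LinearMap.ker (N ^ (i + 1))

variable (q φ N) in
noncomputable def primitivePiece (k : ℚ) (p : {x : ℕ × ℕ // x.2 ≤ x.1}) : Submodule Ω V :=
  (primitivePart q φ N k p.1.1).map (N ^ p.1.2)

section Primitive

variable {k : ℚ}

theorem pow_apply_eq_zero_of_mem_primitivePart {i m : ℕ} (hm : i < m) {x : V}
    (hx : x ∈ primitivePart q φ N k i) : (N ^ m) x = 0 := by
  rw [← Nat.sub_add_cancel hm, pow_add, Module.End.mul_apply, hx.2, map_zero]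

theorem map_pow_primitivePart_le (hq : q ≠ 0) (hrel : N * φ = (q : Ω) • (φ * N))
    (i j : ℕ) :
    (primitivePart q φ N k i).map (N ^ j) ≤ wdWeightSpace q φ (k + i - 2 * j) :=
  (Submodule.map_mono inf_le_left).trans (map_pow_wdWeightSpace_le hq hrel _ j)

theorem map_iSup_primitivePiece_le :
    (⨆ p, primitivePiece q φ N k p).map N ≤ ⨆ p, primitivePiece q φ N k p := by
  rw [Submodule.map_iSup]
  refine iSup_le fun ⟨⟨i, j⟩, (hji : j ≤ i)⟩ => ?_
  rw [primitivePiece, ← Submodule.map_comp, ← Module.End.mul_eq_comp, ← pow_succ']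
  rcases hji.lt_or_eq with hlt | rfl
  · exact le_iSup_of_le ⟨(i, j + 1), hlt⟩ le_rfl
  · rintro _ ⟨x, hx, rfl⟩
    rw [pow_apply_eq_zero_of_mem_primitivePart (Nat.lt_succ_self _) hx]
    exact zero_mem _

end Primitive

theorem WDMixed.exists_wdWeightSpace_eq_bot [FiniteDimensional Ω V] (h : WDMixed q φ) (k : ℚ) :
    ∃ M : ℕ, ∀ n, M ≤ n → wdWeightSpace q φ (k + n) = ⊥ := by
  have hfin : {n : ℕ | wdWeightSpace q φ (k + n) ≠ ⊥}.Finite :=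
    (WellFoundedGT.finite_ne_bot_of_iSupIndep h.submodule_iSupIndep).preimage
      fun a _ b _ hab => by simpa using hab
  obtain ⟨M, hM⟩ := hfin.bddAbove
  exact ⟨M + 1, fun n hn => by_contra fun hne => by have := hM hne; omega⟩

namespace WDPure

variable {k : ℚ}

theorem eq_zero_of_pow_apply_eq_zero (h : WDPure q φ N k) {i : ℕ} {x : V}
    (hx : x ∈ wdWeightSpace q φ (k + i)) (hNx : (N ^ i) x = 0) : x = 0 := by
  rcases Nat.eq_zero_or_pos i with rfl | hi
  · simpa using hNx
  · exact (h.2.2 i (by exact_mod_cast hi)).1 x (by simpa using hx) (by simpa using hNx)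

theorem map_pow_wdWeightSpace (h : WDPure q φ N k) {i : ℕ} (hi : 1 ≤ i) :
    (wdWeightSpace q φ (k + i)).map (N ^ i) = wdWeightSpace q φ (k - i) := by
  simpa using (h.2.2 i (by exact_mod_cast hi)).2

theorem eq_zero_of_mem_primitivePart (h : WDPure q φ N k) {i j : ℕ} (hj : j ≤ i) {x : V}
    (hx : x ∈ primitivePart q φ N k i) (hNx : (N ^ j) x = 0) : x = 0 :=
  h.eq_zero_of_pow_apply_eq_zero hx.1 <| by
    rw [← Nat.sub_add_cancel hj, pow_add, Module.End.mul_apply, hNx, map_zero]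

theorem iSupIndep_primitivePiece (h : WDPure q φ N k) (hq : q ≠ 0)
    (hrel : N * φ = (q : Ω) • (φ * N)) :
    iSupIndep (primitivePiece q φ N k) := by
  refine iSupIndep_of_iSupIndep_fibers (B := fun r : ℤ => wdWeightSpace q φ (k + r))
    (f := fun p => (p.1.1 : ℤ) - 2 * p.1.2)
    (h.1.submodule_iSupIndep.comp fun a b hab => by simpa using hab) (fun p => ?_) (fun r => ?_)
  · refine (map_pow_primitivePart_le hq hrel _ _).trans_eq ?_
    congr 1
    push_cast
    ring
  refine iSupIndep_of_map_eq_zero_of_le (fun p => p.1.1.2) (fun p => N ^ (p.1.1.1 - p.1.1.2))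
    ?_ ?_
  · rintro p _ ⟨y, hy, rfl⟩ hy0
    rw [← Module.End.mul_apply, ← pow_add, Nat.sub_add_cancel p.1.2] at hy0
    rw [h.eq_zero_of_pow_apply_eq_zero hy.1 hy0, map_zero]
  · rintro p p' hne hle _ ⟨y, hy, rfl⟩
    have hr : (p.1.1.1 : ℤ) - 2 * p.1.1.2 = r := p.2
    have hr' : (p'.1.1.1 : ℤ) - 2 * p'.1.1.2 = r := p'.2
    have hlt : p'.1.1.2 < p.1.1.2 := hle.lt_of_ne fun hjj =>
      hne (Subtype.ext (Subtype.ext (Prod.ext (by omega) hjj)))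
    rw [← Module.End.mul_apply, ← pow_add]
    exact pow_apply_eq_zero_of_mem_primitivePart (by have := p.1.2; omega) hy

theorem wdWeightSpace_le_primitivePart_sup (h : WDPure q φ N k) (hq : q ≠ 0)
    (hrel : N * φ = (q : Ω) • (φ * N)) (n : ℕ) :
    wdWeightSpace q φ (k + n) ≤
      primitivePart q φ N k n ⊔ (wdWeightSpace q φ (k + (n + 2 : ℕ))).map N := by
  intro x hx
  have hNx : (N ^ (n + 1)) x ∈ (wdWeightSpace q φ (k + (n + 2 : ℕ))).map (N ^ (n + 2)) := by
    rw [h.map_pow_wdWeightSpace (by omega)]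
    refine (map_pow_wdWeightSpace_le hq hrel _ (n + 1)).trans_eq ?_ (Submodule.mem_map_of_mem hx)
    congr 1
    push_cast
    ring
  obtain ⟨y, hy, hyx⟩ := hNx
  have hNy : N y ∈ wdWeightSpace q φ (k + n) := by
    refine (map_wdWeightSpace_le hq hrel _).trans_eq ?_ (Submodule.mem_map_of_mem hy)
    congr 1
    push_cast
    ring
  refine Submodule.mem_sup.2
    ⟨x - N y, ⟨sub_mem hx hNy, ?_⟩, N y, Submodule.mem_map_of_mem hy, sub_add_cancel _ _⟩
  rw [SetLike.mem_coe, LinearMap.mem_ker, map_sub, ← Module.End.mul_apply, ← pow_succ, hyx,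
    sub_self]

theorem wdWeightSpace_natCast_le_iSup_primitivePiece [FiniteDimensional Ω V]
    (h : WDPure q φ N k) (hq : q ≠ 0) (hrel : N * φ = (q : Ω) • (φ * N)) (n : ℕ) :
    wdWeightSpace q φ (k + n) ≤
      ⨆ p, primitivePiece q φ N k p := by
  obtain ⟨M, hM⟩ := h.1.exists_wdWeightSpace_eq_bot k
  suffices ∀ d n, M ≤ n + d →
      wdWeightSpace q φ (k + n) ≤ ⨆ p, primitivePiece q φ N k p from this M n (by omega)
  intro d
  induction d with
  | zero =>
    intro n hn
    rw [hM n hn]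
    exact bot_le
  | succ d ih =>
    intro n hn
    refine (h.wdWeightSpace_le_primitivePart_sup hq hrel n).trans (sup_le ?_ ?_)
    · exact le_iSup_of_le ⟨(n, 0), n.zero_le⟩ (by simp [primitivePiece, Module.End.one_eq_id])
    · exact (Submodule.map_mono (ih (n + 2) (by omega))).trans
        map_iSup_primitivePiece_le

theorem iSup_primitivePiece_eq_top [FiniteDimensional Ω V] (h : WDPure q φ N k)
    (hq : q ≠ 0) (hrel : N * φ = (q : Ω) • (φ * N)) :
    ⨆ p, primitivePiece q φ N k p = ⊤ := by
  rw [eq_top_iff, ← h.1.submodule_iSup_eq_top]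
  refine iSup_le fun w => ?_
  by_cases hw : ∃ r : ℤ, w = k + r
  swap
  · rw [h.2.1 w hw]
    exact bot_le
  obtain ⟨r, rfl⟩ := hw
  obtain ⟨n, rfl | rfl⟩ := Int.eq_nat_or_neg r
  · simpa using h.wdWeightSpace_natCast_le_iSup_primitivePiece hq hrel n
  rcases n.eq_zero_or_pos with rfl | hn
  · simpa using h.wdWeightSpace_natCast_le_iSup_primitivePiece hq hrel 0
  rw [Int.cast_neg, Int.cast_natCast, ← sub_eq_add_neg, ← h.map_pow_wdWeightSpace hn]
  exact (Submodule.map_mono (h.wdWeightSpace_natCast_le_iSup_primitivePiece hq hrel n)).trans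
    (Submodule.map_pow_le_of_map_le map_iSup_primitivePiece_le n)

end WDPure

end WeilDeligne

theorem statement7_general {Ω V : Type*} [Field Ω] [CharZero Ω]
    [AddCommGroup V] [Module Ω V] [FiniteDimensional Ω V]
    (q : ℕ) (hq : 2 ≤ q) (φ N : Module.End Ω V)
    (hrel : N * φ = (q : Ω) • (φ * N))
    (k : ℚ) (hpure : WDPure q φ N k) :
    (∀ i j : ℕ, j ≤ i →
      (∀ x ∈ wdWeightSpace q φ (k + i) ⊓ LinearMap.ker (N ^ (i + 1)),
        (N ^ j) x = 0 → x = 0) ∧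
      Submodule.map (N ^ j) (wdWeightSpace q φ (k + i) ⊓ LinearMap.ker (N ^ (i + 1))) ≤
        wdWeightSpace q φ (k + i - 2 * j)) ∧
    DirectSum.IsInternal (fun p : {x : ℕ × ℕ // x.2 ≤ x.1} =>
      Submodule.map (N ^ p.1.2)
        (wdWeightSpace q φ (k + p.1.1) ⊓ LinearMap.ker (N ^ (p.1.1 + 1)))) := by
  have hq0 : q ≠ 0 := by omega
  refine ⟨fun i j hj => ⟨fun x hx => hpure.eq_zero_of_mem_primitivePart hj hx,
    map_pow_primitivePart_le hq0 hrel i j⟩, ?_⟩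
  exact DirectSum.isInternal_submodule_of_iSupIndep_of_iSup_eq_top
    (hpure.iSupIndep_primitivePiece hq0 hrel)
    (hpure.iSup_primitivePiece_eq_top hq0 hrel)

/-- primitive decomposition of a pure Frobenius-semisimple Weil–Deligne
representation.  With `P(i) = V_{k+i} ∩ ker (N^{i+1})`:  (a) for `0 ≤ j ≤ i`, `N^j` is
injective on `P(i)` and maps it into `V_{k+i-2j}`; (b) `V` is the internal direct sum of
the subspaces `N^j (P(i))` over pairs `(i, j)` with `0 ≤ j ≤ i`. -/
theorem statement7 {Ω V : Type*} [Field Ω] [CharZero Ω] [IsAlgClosed Ω]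
    [AddCommGroup V] [Module Ω V] [FiniteDimensional Ω V]
    (q : ℕ) (hq : 2 ≤ q) (φ N : Module.End Ω V)
    (hφ : IsUnit φ) (hrel : N * φ = (q : Ω) • (φ * N))
    (hdiag : (⨆ α : Ω, φ.eigenspace α) = ⊤)
    (k : ℚ) (hpure : WDPure q φ N k) :
    (∀ i j : ℕ, j ≤ i →
      (∀ x ∈ wdWeightSpace q φ (k + i) ⊓ LinearMap.ker (N ^ (i + 1)),
        (N ^ j) x = 0 → x = 0) ∧
      Submodule.map (N ^ j) (wdWeightSpace q φ (k + i) ⊓ LinearMap.ker (N ^ (i + 1))) ≤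
        wdWeightSpace q φ (k + i - 2 * j)) ∧
    DirectSum.IsInternal (fun p : {x : ℕ × ℕ // x.2 ≤ x.1} =>
      Submodule.map (N ^ p.1.2)
        (wdWeightSpace q φ (k + p.1.1) ⊓ LinearMap.ker (N ^ (p.1.1 + 1)))) :=
  statement7_general q hq φ N hrel k hpure
end
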